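/- Performance difference lemma: for any two policies $\pi, \pi'$ of a finite discounted MDP with discount $\gamma \in (0,1)$, and any state $s$, $V^{\pi'}(s) - V^{\pi}(s) = \frac{1}{1-\gamma} \mathbb{E}_{s' \sim d_s^{\pi'}}\left[\langle Q^{\pi}(s', \cdot), \pi'(\cdot|s') - \pi(\cdot|s')\rangle\right]$. -/

import Mathlib

/-
With `D_K h (s) = ∑ₜ γᵗ (Kᵗ h)(s)` the discounted sum of `h` along the Markov chain with kernel `K`,
one has `V^π = D_{K_π} c_π`, the Bellman equation `V^π = c_π + γ K_π V^π`, and the telescoping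
identity `D_K (γ K f - f) = -f`. By Bellman, the advantage `⟨Q^π(s', ·), π'(·|s') - π(·|s')⟩` is
`c_{π'} + γ K_{π'} V^π - V^π` at `s'`, so applying `D_{K_{π'}}` yields `V^{π'} - V^π`; and the
`d_s^{π'}`-expectation of `h` is `(1 - γ) D_{K_{π'}} h (s)`.
-/

open Finset

/-- `t`-step transition probabilities of a finite Markov chain with kernel `K`. -/
noncomputable def kpow {S : Type*} [Fintype S] [DecidableEq S]
    (K : S → S → ℝ) : ℕ → S → S → ℝ
  | 0, s0, s' => if s0 = s' then 1 else 0
  | t + 1, s0, s' => ∑ u, K s0 u * kpow K t u s'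

/-- State transition kernel induced by a policy. -/
noncomputable def stateKer {S A : Type*} [Fintype A]
    (Pk : S → A → S → ℝ) (π : S → A → ℝ) : S → S → ℝ :=
  fun s s' => ∑ a, π s a * Pk s a s'

/-- Value function of a policy. -/
noncomputable def Vfun {S A : Type*} [Fintype S] [Fintype A] [DecidableEq S]
    (Pk : S → A → S → ℝ) (c : S → A → ℝ) (π : S → A → ℝ) (γ : ℝ) : S → ℝ :=
  fun s => ∑' t : ℕ, γ ^ t * ∑ s', kpow (stateKer Pk π) t s s' * ∑ a, π s' a * c s' a

/-- Q-function of a policy. -/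
noncomputable def Qfun {S A : Type*} [Fintype S] [Fintype A] [DecidableEq S]
    (Pk : S → A → S → ℝ) (c : S → A → ℝ) (π : S → A → ℝ) (γ : ℝ) : S → A → ℝ :=
  fun s a => c s a + γ * ∑ s', Pk s a s' * Vfun Pk c π γ s'

/-- Discounted state visitation measure of a policy started at `s`. -/
noncomputable def dvisit {S A : Type*} [Fintype S] [Fintype A] [DecidableEq S]
    (Pk : S → A → S → ℝ) (π : S → A → ℝ) (γ : ℝ) : S → S → ℝ :=
  fun s s' => (1 - γ) * ∑' t : ℕ, γ ^ t * kpow (stateKer Pk π) t s s'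

section MarkovKernel

variable {S : Type*} [Fintype S] [DecidableEq S] {K : S → S → ℝ}

noncomputable def discountedSum (K : S → S → ℝ) (γ : ℝ) (h : S → ℝ) (s : S) : ℝ :=
  ∑' t : ℕ, γ ^ t * ∑ s', kpow K t s s' * h s'

lemma kpow_nonneg (hK0 : ∀ s s', 0 ≤ K s s') (t : ℕ) (s s' : S) : 0 ≤ kpow K t s s' := by
  induction t generalizing s with
  | zero => simp only [kpow]; split <;> norm_num
  | succ t ih => exact sum_nonneg fun u _ => mul_nonneg (hK0 s u) (ih u)

lemma sum_kpow_eq_one (hK1 : ∀ s, ∑ s', K s s' = 1) (t : ℕ) (s : S) :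
    ∑ s', kpow K t s s' = 1 := by
  induction t generalizing s with
  | zero => simp [kpow]
  | succ t ih => simp only [kpow]; rw [sum_comm]; simp only [← mul_sum, ih, mul_one, hK1]

lemma kpow_le_one (hK0 : ∀ s s', 0 ≤ K s s') (hK1 : ∀ s, ∑ s', K s s' = 1)
    (t : ℕ) (s s' : S) : kpow K t s s' ≤ 1 :=
  sum_kpow_eq_one hK1 t s ▸ single_le_sum (fun u _ => kpow_nonneg hK0 t s u) (mem_univ s')

lemma kpow_succ (t : ℕ) (s s' : S) :
    kpow K (t + 1) s s' = ∑ u, kpow K t s u * K u s' := by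
  induction t generalizing s with
  | zero => simp [kpow]
  | succ t ih =>
    rw [kpow]
    simp only [ih, mul_sum]
    simp only [kpow, sum_mul]
    rw [sum_comm]
    exact sum_congr rfl fun _ _ => sum_congr rfl fun _ _ => by ring

lemma sum_kpow_succ_mul (h : S → ℝ) (t : ℕ) (s : S) :
    ∑ s', kpow K (t + 1) s s' * h s' = ∑ u, K s u * ∑ s', kpow K t u s' * h s' := by
  simp only [kpow, sum_mul, mul_sum]
  rw [sum_comm]
  exact sum_congr rfl fun _ _ => sum_congr rfl fun _ _ => mul_assoc _ _ _

lemma sum_kpow_succ_mul' (h : S → ℝ) (t : ℕ) (s : S) :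
    ∑ s', kpow K (t + 1) s s' * h s' = ∑ s', kpow K t s s' * ∑ u, K s' u * h u := by
  simp only [kpow_succ, sum_mul, mul_sum]
  rw [sum_comm]
  exact sum_congr rfl fun _ _ => sum_congr rfl fun _ _ => mul_assoc _ _ _

lemma abs_sum_kpow_mul_le (hK0 : ∀ s s', 0 ≤ K s s') (hK1 : ∀ s, ∑ s', K s s' = 1)
    (h : S → ℝ) (t : ℕ) (s : S) : |∑ s', kpow K t s s' * h s'| ≤ ∑ s', |h s'| := by
  refine (abs_sum_le_sum_abs _ _).trans (sum_le_sum fun u _ => ?_)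
  rw [abs_mul, abs_of_nonneg (kpow_nonneg hK0 t s u)]
  exact mul_le_of_le_one_left (abs_nonneg _) (kpow_le_one hK0 hK1 t s u)

lemma summable_pow_mul_of_abs_le {γ : ℝ} (hγ : |γ| < 1) {b : ℕ → ℝ} {C : ℝ}
    (hb : ∀ t, |b t| ≤ C) : Summable fun t => γ ^ t * b t := by
  refine .of_norm_bounded ((summable_geometric_of_lt_one (abs_nonneg γ) hγ).mul_right C) fun t => ?_
  rw [Real.norm_eq_abs, abs_mul, abs_pow]
  exact mul_le_mul_of_nonneg_left (hb t) (pow_nonneg (abs_nonneg γ) t)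

lemma summable_discountedSum {γ : ℝ} (hγ : |γ| < 1)
    (hK0 : ∀ s s', 0 ≤ K s s') (hK1 : ∀ s, ∑ s', K s s' = 1) (h : S → ℝ) (s : S) :
    Summable fun t => γ ^ t * ∑ s', kpow K t s s' * h s' :=
  summable_pow_mul_of_abs_le hγ (abs_sum_kpow_mul_le hK0 hK1 h · s)

lemma discountedSum_add {γ : ℝ} (hγ : |γ| < 1)
    (hK0 : ∀ s s', 0 ≤ K s s') (hK1 : ∀ s, ∑ s', K s s' = 1) (f g : S → ℝ) (s : S) :
    discountedSum K γ (f + g) s = discountedSum K γ f s + discountedSum K γ g s := by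
  simp only [discountedSum, Pi.add_apply, mul_add, sum_add_distrib]
  exact (summable_discountedSum hγ hK0 hK1 f s).tsum_add (summable_discountedSum hγ hK0 hK1 g s)

lemma discountedSum_bellman (hγ : |γ| < 1)
    (hK0 : ∀ s s', 0 ≤ K s s') (hK1 : ∀ s, ∑ s', K s s' = 1) (h : S → ℝ) (s : S) :
    discountedSum K γ h s = h s + γ * ∑ u, K s u * discountedSum K γ h u := by
  have hsum := summable_discountedSum hγ hK0 hK1 h
  rw [discountedSum, (hsum s).tsum_eq_zero_add]
  congr 1
  · simp [kpow]
  simp only [discountedSum, ← tsum_mul_left]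
  rw [← Summable.tsum_finsetSum fun u _ => (hsum u).mul_left _, ← tsum_mul_left]
  refine tsum_congr fun t => ?_
  rw [sum_kpow_succ_mul, pow_succ', mul_assoc, mul_sum]
  simp only [mul_left_comm]

lemma discountedSum_telescope (hγ : |γ| < 1)
    (hK0 : ∀ s s', 0 ≤ K s s') (hK1 : ∀ s, ∑ s', K s s' = 1) (f : S → ℝ) (s : S) :
    discountedSum K γ (fun s' => γ * ∑ u, K s' u * f u - f s') s = -f s := by
  set a : ℕ → ℝ := fun t => γ ^ t * ∑ s', kpow K t s s' * f s' with ha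
  have hsum : Summable a := summable_discountedSum hγ hK0 hK1 f s
  have hterm (t : ℕ) :
      γ ^ t * ∑ s', kpow K t s s' * (γ * ∑ u, K s' u * f u - f s') = a (t + 1) - a t := by
    simp only [ha, sum_kpow_succ_mul', mul_sub, sum_sub_distrib, mul_left_comm _ γ, ← mul_sum]
    ring
  rw [discountedSum, tsum_congr hterm, ((summable_nat_add_iff 1).mpr hsum).tsum_sub hsum,
    hsum.tsum_eq_zero_add]
  simp [ha, kpow]

lemma sum_tsum_pow_mul_kpow_mul (hγ : |γ| < 1)
    (hK0 : ∀ s s', 0 ≤ K s s') (hK1 : ∀ s, ∑ s', K s s' = 1) (h : S → ℝ) (s : S) :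
    ∑ s', (∑' t : ℕ, γ ^ t * kpow K t s s') * h s' = discountedSum K γ h s := by
  have hsum (s' : S) : Summable fun t => γ ^ t * (kpow K t s s' * h s') :=
    summable_pow_mul_of_abs_le hγ fun t => by
      rw [abs_mul, abs_of_nonneg (kpow_nonneg hK0 t s s')]
      exact mul_le_of_le_one_left (abs_nonneg _) (kpow_le_one hK0 hK1 t s s')
  simp only [discountedSum, ← tsum_mul_right, mul_assoc, mul_sum]
  exact (Summable.tsum_finsetSum fun s' _ => hsum s').symm

end MarkovKernel

section MDP

variable {S A : Type*} [Fintype A] {Pk : S → A → S → ℝ}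

lemma stateKer_nonneg {ρ : S → A → ℝ} (hP0 : ∀ s a s', 0 ≤ Pk s a s')
    (hρ0 : ∀ s a, 0 ≤ ρ s a) (s s' : S) : 0 ≤ stateKer Pk ρ s s' :=
  sum_nonneg fun a _ => mul_nonneg (hρ0 s a) (hP0 s a s')

variable [Fintype S]

lemma sum_stateKer_eq_one {ρ : S → A → ℝ} (hP1 : ∀ s a, ∑ s', Pk s a s' = 1)
    (hρ1 : ∀ s, ∑ a, ρ s a = 1) (s : S) : ∑ s', stateKer Pk ρ s s' = 1 := by
  simp only [stateKer]
  rw [sum_comm]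
  simp only [← mul_sum, hP1, mul_one, hρ1]

variable [DecidableEq S]

lemma Vfun_eq_discountedSum (c : S → A → ℝ) (π : S → A → ℝ) (γ : ℝ) :
    Vfun Pk c π γ = discountedSum (stateKer Pk π) γ fun s => ∑ a, π s a * c s a :=
  rfl

lemma sum_dvisit_mul (π : S → A → ℝ) {γ : ℝ} (hγ : |γ| < 1) (hP0 : ∀ s a s', 0 ≤ Pk s a s')
    (hP1 : ∀ s a, ∑ s', Pk s a s' = 1) (hπ0 : ∀ s a, 0 ≤ π s a) (hπ1 : ∀ s, ∑ a, π s a = 1)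
    (h : S → ℝ) (s : S) :
    ∑ s', dvisit Pk π γ s s' * h s' = (1 - γ) * discountedSum (stateKer Pk π) γ h s := by
  simp only [dvisit, mul_assoc, ← mul_sum]
  rw [sum_tsum_pow_mul_kpow_mul hγ (stateKer_nonneg hP0 hπ0) (sum_stateKer_eq_one hP1 hπ1)]

lemma sum_Qfun_mul (c : S → A → ℝ) (π ρ : S → A → ℝ) (γ : ℝ) (s : S) :
    ∑ a, Qfun Pk c π γ s a * ρ s a
      = ∑ a, ρ s a * c s a + γ * ∑ u, stateKer Pk ρ s u * Vfun Pk c π γ u := by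
  simp only [Qfun, add_mul, sum_add_distrib]
  congr 1
  · exact sum_congr rfl fun _ _ => mul_comm _ _
  · simp only [stateKer, sum_mul, mul_sum]
    rw [sum_comm]
    exact sum_congr rfl fun _ _ => sum_congr rfl fun _ _ => by ring

lemma Vfun_bellman (c : S → A → ℝ) {π : S → A → ℝ} {γ : ℝ} (hγ : |γ| < 1)
    (hP0 : ∀ s a s', 0 ≤ Pk s a s') (hP1 : ∀ s a, ∑ s', Pk s a s' = 1)
    (hπ0 : ∀ s a, 0 ≤ π s a) (hπ1 : ∀ s, ∑ a, π s a = 1) (s : S) :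
    Vfun Pk c π γ s = ∑ a, π s a * c s a + γ * ∑ u, stateKer Pk π s u * Vfun Pk c π γ u := by
  rw [Vfun_eq_discountedSum]
  exact discountedSum_bellman hγ (stateKer_nonneg hP0 hπ0) (sum_stateKer_eq_one hP1 hπ1) _ s

lemma sum_Qfun_mul_sub (c : S → A → ℝ) {π : S → A → ℝ} (π' : S → A → ℝ) {γ : ℝ} (hγ : |γ| < 1)
    (hP0 : ∀ s a s', 0 ≤ Pk s a s') (hP1 : ∀ s a, ∑ s', Pk s a s' = 1)
    (hπ0 : ∀ s a, 0 ≤ π s a) (hπ1 : ∀ s, ∑ a, π s a = 1) (s : S) :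
    ∑ a, Qfun Pk c π γ s a * (π' s a - π s a)
      = ∑ a, π' s a * c s a
        + (γ * ∑ u, stateKer Pk π' s u * Vfun Pk c π γ u - Vfun Pk c π γ s) := by
  simp only [mul_sub, sum_sub_distrib, sum_Qfun_mul]
  rw [← Vfun_bellman c hγ hP0 hP1 hπ0 hπ1]
  ring

end MDP

theorem performance_difference_general {S A : Type*} [Fintype S] [Fintype A]
    [DecidableEq S]
    (Pk : S → A → S → ℝ) (c : S → A → ℝ) (π π' : S → A → ℝ) (γ : ℝ)
    (hP0 : ∀ s a s', 0 ≤ Pk s a s') (hP1 : ∀ s a, ∑ s', Pk s a s' = 1)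
    (hπ0 : ∀ s a, 0 ≤ π s a) (hπ1 : ∀ s, ∑ a, π s a = 1)
    (hπ'0 : ∀ s a, 0 ≤ π' s a) (hπ'1 : ∀ s, ∑ a, π' s a = 1)
    (hγ0 : 0 < γ) (hγ1 : γ < 1) (s : S) :
    Vfun Pk c π' γ s - Vfun Pk c π γ s
      = (1 / (1 - γ)) *
        ∑ s', dvisit Pk π' γ s s' *
          ∑ a, Qfun Pk c π γ s' a * (π' s' a - π s' a) := by
  have hγ : |γ| < 1 := abs_lt.2 ⟨by linarith, hγ1⟩
  have hK0 := stateKer_nonneg hP0 hπ'0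
  have hK1 := sum_stateKer_eq_one hP1 hπ'1
  set V := Vfun Pk c π γ
  calc Vfun Pk c π' γ s - V s
      = discountedSum (stateKer Pk π') γ (fun s' => ∑ a, π' s' a * c s' a) s
        + discountedSum (stateKer Pk π') γ
            (fun s' => γ * ∑ u, stateKer Pk π' s' u * V u - V s') s := by
        rw [discountedSum_telescope hγ hK0 hK1, Vfun_eq_discountedSum, sub_eq_add_neg]
    _ = discountedSum (stateKer Pk π') γ
          (fun s' => ∑ a, Qfun Pk c π γ s' a * (π' s' a - π s' a)) s := by
        rw [← discountedSum_add hγ hK0 hK1]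
        simp only [sum_Qfun_mul_sub c π' hγ hP0 hP1 hπ0 hπ1]
        rfl
    _ = _ := by
        rw [sum_dvisit_mul π' hγ hP0 hP1 hπ'0 hπ'1, ← mul_assoc,
          one_div_mul_cancel (sub_ne_zero.2 hγ1.ne'), one_mul]

/-- performance difference lemma:
`V^{π'}(s) - V^π(s) = (1/(1-γ)) 𝔼_{s' ~ d_s^{π'}} ⟨Q^π(s',·), π'(·|s') - π(·|s')⟩`. -/
theorem performance_difference {S A : Type*} [Fintype S] [Fintype A]
    [DecidableEq S] [DecidableEq A]
    (Pk : S → A → S → ℝ) (c : S → A → ℝ) (π π' : S → A → ℝ) (γ : ℝ)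
    (hP0 : ∀ s a s', 0 ≤ Pk s a s') (hP1 : ∀ s a, ∑ s', Pk s a s' = 1)
    (hπ0 : ∀ s a, 0 ≤ π s a) (hπ1 : ∀ s, ∑ a, π s a = 1)
    (hπ'0 : ∀ s a, 0 ≤ π' s a) (hπ'1 : ∀ s, ∑ a, π' s a = 1)
    (hc0 : ∀ s a, 0 ≤ c s a) (hc1 : ∀ s a, c s a ≤ 1)
    (hγ0 : 0 < γ) (hγ1 : γ < 1) (s : S) :
    Vfun Pk c π' γ s - Vfun Pk c π γ s
      = (1 / (1 - γ)) *
        ∑ s', dvisit Pk π' γ s s' *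
          ∑ a, Qfun Pk c π γ s' a * (π' s' a - π s' a) :=
  performance_difference_general Pk c π π' γ hP0 hP1 hπ0 hπ1 hπ'0 hπ'1 hγ0 hγ1 s
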